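/- For a finite simple graph G, th_⌊Z⌋(G) = 3 if and only if G is isomorphic to one of the following ten graphs: C_4, P_4, 2K_2, K_1 ⊔ P_3, K_2 ⊔ 2K_1, 4K_1, K_3, P_3, K_1 ⊔ K_2, 3K_1. -/

import Mathlib

open SimpleGraph

namespace ZFT

variable {V : Type*} {α : Type*} {β : Type*}

/-! ### Standard zero forcing (simultaneous propagation) -/

/-- One round of simultaneous standard zero forcing: a blue vertex forces its
unique white neighbor. -/
def zStep (G : SimpleGraph V) (S : Set V) : Set V :=
  S ∪ {w | ∃ u ∈ S, G.Adj u w ∧ ∀ x, G.Adj u x → x ∉ S → x = w}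

/-- `B` is a standard zero forcing set of `G`. -/
def IsZeroForcingSet (G : SimpleGraph V) (B : Set V) : Prop :=
  ∃ t : ℕ, (zStep G)^[t] B = Set.univ

/-- The standard propagation time `pt_Z(G;B)` (`⊤` if `B` is not a zero forcing set). -/
noncomputable def ptZ (G : SimpleGraph V) (B : Set V) : ℕ∞ :=
  sInf {n : ℕ∞ | ∃ t : ℕ, n = t ∧ (zStep G)^[t] B = Set.univ}

/-- The standard throttling number `th_Z(G;B) = |B| + pt_Z(G;B)`. -/
noncomputable def thZ (G : SimpleGraph V) (B : Set V) : ℕ∞ :=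
  (B.ncard : ℕ∞) + ptZ G B

/-- The standard throttling number `th_Z(G)`. -/
noncomputable def thZgraph (G : SimpleGraph V) : ℕ∞ :=
  sInf {n : ℕ∞ | ∃ B : Set V, IsZeroForcingSet G B ∧ n = thZ G B}

/-- The standard zero forcing number `Z(G)`. -/
noncomputable def Znum (G : SimpleGraph V) : ℕ :=
  sInf {k : ℕ | ∃ B : Set V, IsZeroForcingSet G B ∧ B.ncard = k}

/-- The standard propagation time `pt_Z(G)`, minimized over minimum zero forcing sets. -/
noncomputable def ptZgraph (G : SimpleGraph V) : ℕ∞ :=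
  sInf {n : ℕ∞ | ∃ B : Set V, IsZeroForcingSet G B ∧ B.ncard = Znum G ∧ n = ptZ G B}

/-! ### Sets of standard forces -/

/-- Validity of a single standard force `u → w` when `blue` is the blue set. -/
def zForceValid (G : SimpleGraph V) (blue : Set V) (u w : V) : Prop :=
  u ∈ blue ∧ w ∉ blue ∧ G.Adj u w ∧ ∀ x, G.Adj u x → x ∉ blue → x = w

/-- Validity of a chronological list of standard forces starting from a blue set. -/
def zValidList (G : SimpleGraph V) : Set V → List (V × V) → Prop
  | _, [] => True
  | blue, p :: L => zForceValid G blue p.1 p.2 ∧ zValidList G (insert p.2 blue) L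

/-- The blue set after performing all forces in a list, starting from `B`. -/
def endBlue (B : Set V) (L : List (V × V)) : Set V :=
  B ∪ {w | ∃ u, (u, w) ∈ L}

/-- The set of vertices that have performed a force in a list. -/
def endForced (L : List (V × V)) : Set V := {u | ∃ w, (u, w) ∈ L}

/-- `F` is a set of standard forces of `B` in `G` (recorded from a maximal
chronological list of forces). -/
def IsZForceSet (G : SimpleGraph V) (B : Set V) (F : Set (V × V)) : Prop :=
  ∃ L : List (V × V), zValidList G B L ∧
    (∀ u w, ¬ zForceValid G (endBlue B L) u w) ∧ F = {p | p ∈ L}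

/-- The set of blue vertices at time `t` when the forces of `F` are performed at the
earliest possible time steps, starting from `B` blue. -/
def zBlueAt (G : SimpleGraph V) (F : Set (V × V)) (B : Set V) : ℕ → Set V
  | 0 => B
  | t + 1 =>
      zBlueAt G F B t ∪ {w | ∃ v, (v, w) ∈ F ∧ zForceValid G (zBlueAt G F B t) v w}

/-- The standard propagation time `pt_Z(G;F)` of a set of forces `F` of `B`. -/
noncomputable def ptZofF (G : SimpleGraph V) (F : Set (V × V)) (B : Set V) : ℕ∞ :=
  sInf {n : ℕ∞ | ∃ t : ℕ, n = t ∧ zBlueAt G F B t = Set.univ}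

/-! ### `⌊Z⌋` (minor monotone floor) forcing -/

/-- Validity of a single `⌊Z⌋` force `u → w`: `u` is blue and has not yet forced, `w`
is white, and either `w` is the unique white neighbor of `u`, or all neighbors of `u`
are blue (a hop). -/
def zfForceValid (G : SimpleGraph V) (blue forced : Set V) (u w : V) : Prop :=
  u ∈ blue ∧ w ∉ blue ∧ u ∉ forced ∧
    ((G.Adj u w ∧ ∀ x, G.Adj u x → x ∉ blue → x = w) ∨ ∀ x, G.Adj u x → x ∈ blue)

/-- Validity of a chronological list of `⌊Z⌋` forces. -/
def zfValidList (G : SimpleGraph V) : Set V → Set V → List (V × V) → Prop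
  | _, _, [] => True
  | blue, forced, p :: L =>
      zfForceValid G blue forced p.1 p.2 ∧
        zfValidList G (insert p.2 blue) (insert p.1 forced) L

/-- `F` is a set of `⌊Z⌋` forces of `B` in `G` (recorded from a maximal chronological
list of `⌊Z⌋` forces starting with `B` blue). -/
def IsZFForceSet (G : SimpleGraph V) (B : Set V) (F : Set (V × V)) : Prop :=
  ∃ L : List (V × V), zfValidList G B ∅ L ∧
    (∀ u w, ¬ zfForceValid G (endBlue B L) (endForced L) u w) ∧ F = {p | p ∈ L}

/-- The set of blue vertices at time `t` when the `⌊Z⌋` forces of `F` are performed at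
the earliest possible time steps, starting from `B` blue. -/
def zfBlueAt (G : SimpleGraph V) (F : Set (V × V)) (B : Set V) : ℕ → Set V
  | 0 => B
  | t + 1 =>
      zfBlueAt G F B t ∪
        {w | ∃ v, (v, w) ∈ F ∧ v ∈ zfBlueAt G F B t ∧ w ∉ zfBlueAt G F B t ∧
          (∀ w', (v, w') ∈ F → w' ∈ zfBlueAt G F B t → w' ∈ B) ∧
          ((G.Adj v w ∧ ∀ x, G.Adj v x → x ∉ zfBlueAt G F B t → x = w) ∨
            ∀ x, G.Adj v x → x ∈ zfBlueAt G F B t)}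

/-- The `⌊Z⌋` propagation time `pt_⌊Z⌋(G;F)` of a set of `⌊Z⌋` forces `F` of `B`. -/
noncomputable def ptZFofF (G : SimpleGraph V) (F : Set (V × V)) (B : Set V) : ℕ∞ :=
  sInf {n : ℕ∞ | ∃ t : ℕ, n = t ∧ zfBlueAt G F B t = Set.univ}

/-- The `⌊Z⌋` propagation time `pt_⌊Z⌋(G;B)`, minimized over sets of `⌊Z⌋` forces of `B`. -/
noncomputable def ptZF (G : SimpleGraph V) (B : Set V) : ℕ∞ :=
  sInf {n : ℕ∞ | ∃ F : Set (V × V), IsZFForceSet G B F ∧ n = ptZFofF G F B}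

/-- The `⌊Z⌋` throttling number `th_⌊Z⌋(G;B) = |B| + pt_⌊Z⌋(G;B)`. -/
noncomputable def thZF (G : SimpleGraph V) (B : Set V) : ℕ∞ :=
  (B.ncard : ℕ∞) + ptZF G B

/-- The `⌊Z⌋` throttling number `th_⌊Z⌋(G)`, minimized over all `B ⊆ V(G)`. -/
noncomputable def thZFgraph (G : SimpleGraph V) : ℕ∞ :=
  sInf {n : ℕ∞ | ∃ B : Set V, n = thZF G B}

/-- `B` is a `⌊Z⌋` forcing set of `G`. -/
def IsZFForcingSet (G : SimpleGraph V) (B : Set V) : Prop :=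
  ∃ F : Set (V × V), IsZFForceSet G B F ∧ B ∪ {w | ∃ u, (u, w) ∈ F} = Set.univ

/-- The `⌊Z⌋` forcing number `⌊Z⌋(G)`. -/
noncomputable def ZFnum (G : SimpleGraph V) : ℕ :=
  sInf {k : ℕ | ∃ B : Set V, IsZFForcingSet G B ∧ B.ncard = k}

/-- The `⌊Z⌋` propagation time `pt_⌊Z⌋(G)`, minimized over minimum `⌊Z⌋` forcing sets. -/
noncomputable def ptZFgraph (G : SimpleGraph V) : ℕ∞ :=
  sInf {n : ℕ∞ | ∃ B : Set V, IsZFForcingSet G B ∧ B.ncard = ZFnum G ∧ n = ptZF G B}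

/-! ### Contractions, minors, and products -/

/-- The graph obtained from `H` by contracting (all) the edges in `C`: its vertices are
the connected components of the spanning subgraph of `H` with edge set `C ∩ E(H)`, and
two distinct components are adjacent iff `H` has an edge between them. -/
def contractEdges (H : SimpleGraph α) (C : Set (Sym2 α)) :
    SimpleGraph (SimpleGraph.fromEdgeSet C ⊓ H).ConnectedComponent where
  Adj c d := c ≠ d ∧ ∃ a b, H.Adj a b ∧
      (SimpleGraph.fromEdgeSet C ⊓ H).connectedComponentMk a = c ∧
      (SimpleGraph.fromEdgeSet C ⊓ H).connectedComponentMk b = d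
  symm := ⟨by
    rintro c d ⟨hcd, a, b, hab, ha, hb⟩
    exact ⟨hcd.symm, b, a, hab.symm, hb, ha⟩⟩
  loopless := ⟨fun c h => h.1 rfl⟩

/-- `G` is a minor of `H`: `G` is isomorphic to a subgraph of a graph obtained from an
induced subgraph of `H` by contracting a set of edges. -/
def IsMinor (G : SimpleGraph β) (H : SimpleGraph α) : Prop :=
  ∃ (s : Set α) (C : Set (Sym2 s))
    (G'' : SimpleGraph (SimpleGraph.fromEdgeSet C ⊓ H.induce s).ConnectedComponent),
      G'' ≤ contractEdges (H.induce s) C ∧ Nonempty (G ≃g G'')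

/-- The Cartesian product `K_a □ P_{b+1}`. -/
def prodKP (a b : ℕ) : SimpleGraph (Fin a × Fin (b + 1)) :=
  (⊤ : SimpleGraph (Fin a)) □ SimpleGraph.pathGraph (b + 1)

/-- The path edges of `K_a □ P_{b+1}` (edges within the copies of `P_{b+1}`). -/
def pathEdges (a b : ℕ) : Set (Sym2 (Fin a × Fin (b + 1))) :=
  {e | ∃ (i : Fin a) (j j' : Fin (b + 1)),
    (SimpleGraph.pathGraph (b + 1)).Adj j j' ∧ e = s((i, j), (i, j'))}

/-- The complete edges of `K_a □ P_{b+1}` (edges within the copies of `K_a`). -/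
def completeEdges (a b : ℕ) : Set (Sym2 (Fin a × Fin (b + 1))) :=
  {e | ∃ (i i' : Fin a) (j : Fin (b + 1)), i ≠ i' ∧ e = s((i, j), (i', j))}

/-- The star `K_{1,n-1}` on `n` vertices: vertex `0` is adjacent to all others. -/
def starGraph (n : ℕ) : SimpleGraph (Fin n) where
  Adj i j := i ≠ j ∧ ((i : ℕ) = 0 ∨ (j : ℕ) = 0)
  symm := ⟨by rintro i j ⟨h1, h2⟩; exact ⟨h1.symm, h2.symm⟩⟩
  loopless := ⟨fun i h => h.1 rfl⟩

/-- The independence number `α(G)`. -/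
noncomputable def indepNum (G : SimpleGraph V) : ℕ :=
  sSup {k : ℕ | ∃ s : Set V, (∀ a ∈ s, ∀ b ∈ s, a ≠ b → ¬ G.Adj a b) ∧ s.ncard = k}

/-!
Every vertex forces at most once, so the vertices that turn blue by time `t + 1` are forced
by pairwise distinct vertices that are blue at time `t`; hence `|blue(t + 1)| ≤ |B| + |blue(t)|`
and `|V| ≤ (t + 1) |B|` whenever `B` colours `G` in time `t`. With `|B| + t ≤ 2` this gives
`|V| ≤ 2`, and with `|B| + t = 3` it gives `|V| ≤ 4`, where `|V| = 4` needs `|B| = 2`, `t = 1`.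
In that case the two forces `u₁ → w₁`, `u₂ → w₂` satisfy `N(uᵢ) ⊆ B ∪ {wᵢ}`, so `u₁w₂`, `u₂w₁`
are disjoint non-edges; conversely two disjoint non-edges `ab`, `cd` of a 4-vertex graph let
`{a, c}` colour it in one step. As `th_⌊Z⌋(G) ≤ |V|`, the graphs with `th_⌊Z⌋(G) = 3` are those
on 3 vertices and those on 4 vertices whose complement has a perfect matching; both families
are listed up to isomorphism by `decide`.
-/

section Forcing

variable {G : SimpleGraph V} {B S : Set V} {F : Set (V × V)} {v w : V}

theorem zfRule_iff :
    ((G.Adj v w ∧ ∀ x, G.Adj v x → x ∉ S → x = w) ∨ ∀ x, G.Adj v x → x ∈ S) ↔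
      ∀ x, G.Adj v x → x ∈ S ∨ x = w := by
  constructor
  · rintro (⟨-, h⟩ | h) x hx
    · by_cases hxS : x ∈ S
      · exact Or.inl hxS
      · exact Or.inr (h x hx hxS)
    · exact Or.inl (h x hx)
  · intro h
    by_cases hvw : G.Adj v w
    · exact Or.inl ⟨hvw, fun x hx hxS => (h x hx).resolve_left hxS⟩
    · refine Or.inr fun x hx => (h x hx).resolve_right ?_
      rintro rfl
      exact hvw hx

theorem zfBlueAt_mono : Monotone (zfBlueAt G F B) :=
  monotone_nat_of_le_succ fun _ => Set.subset_union_left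

theorem exists_force_of_mem_zfBlueAt_succ {t : ℕ} (hw : w ∈ zfBlueAt G F B (t + 1))
    (hwt : w ∉ zfBlueAt G F B t) :
    ∃ v ∈ zfBlueAt G F B t, (v, w) ∈ F ∧ ∀ x, G.Adj v x → x ∈ zfBlueAt G F B t ∨ x = w := by
  obtain hw | ⟨v, hvw, hv, -, -, hrule⟩ := hw
  · exact absurd hw hwt
  · exact ⟨v, hv, hvw, zfRule_iff.1 hrule⟩

theorem exists_forcer_of_mem_zfBlueAt_succ {t : ℕ} (hw : w ∈ zfBlueAt G F B (t + 1))
    (hwB : w ∉ B) : ∃ v ∈ zfBlueAt G F B t, (v, w) ∈ F := by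
  induction t with
  | zero =>
    obtain ⟨v, hv, hvw, -⟩ := exists_force_of_mem_zfBlueAt_succ hw hwB
    exact ⟨v, hv, hvw⟩
  | succ t ih =>
    by_cases hwt : w ∈ zfBlueAt G F B (t + 1)
    · obtain ⟨v, hv, hvw⟩ := ih hwt
      exact ⟨v, zfBlueAt_mono t.le_succ hv, hvw⟩
    · obtain ⟨v, hv, hvw, -⟩ := exists_force_of_mem_zfBlueAt_succ hw hwt
      exact ⟨v, hv, hvw⟩

theorem mem_zfBlueAt_one (hvw : (v, w) ∈ F) (hv : v ∈ B)
    (hN : ∀ x, G.Adj v x → x ∈ B ∨ x = w) : w ∈ zfBlueAt G F B 1 := by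
  by_cases hwB : w ∈ B
  · exact Or.inl hwB
  · exact Or.inr ⟨v, hvw, hv, hwB, fun _ _ h => h, zfRule_iff.2 hN⟩

theorem zfValidList_forcers {blue forced : Set V} {L : List (V × V)}
    (hL : zfValidList G blue forced L) : (L.map Prod.fst).Nodup ∧ ∀ p ∈ L, p.1 ∉ forced := by
  induction L generalizing blue forced with
  | nil => exact ⟨List.nodup_nil, by simp⟩
  | cons p L ih =>
    obtain ⟨hp, hL⟩ := hL
    obtain ⟨hnodup, hfresh⟩ := ih hL
    refine ⟨List.nodup_cons.2 ⟨?_, hnodup⟩, ?_⟩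
    · simp only [List.mem_map, not_exists, not_and]
      exact fun q hq hqp => hfresh q hq (hqp ▸ Set.mem_insert _ _)
    · rintro q (_ | ⟨_, hq⟩)
      · exact hp.2.2.1
      · exact fun h => hfresh q hq (Set.mem_insert_of_mem _ h)

theorem IsZFForceSet.functional (hF : IsZFForceSet G B F) {w' : V} (h : (v, w) ∈ F)
    (h' : (v, w') ∈ F) : w = w' := by
  obtain ⟨L, hL, -, rfl⟩ := hF
  exact congrArg Prod.snd (List.inj_on_of_nodup_map (zfValidList_forcers hL).1 h h' rfl)

theorem isZFForceSet_of_endBlue_eq_univ {L : List (V × V)} (hL : zfValidList G B ∅ L)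
    (h : endBlue B L = Set.univ) : IsZFForceSet G B {p | p ∈ L} :=
  ⟨L, hL, fun _ w hw => hw.2.1 (h ▸ Set.mem_univ w), rfl⟩

theorem _root_.ENat.sInf_mem_of_sInf_ne_top {s : Set ℕ∞} (h : sInf s ≠ ⊤) : sInf s ∈ s :=
  csInf_mem (Set.nonempty_iff_ne_empty.2 fun hs => h (hs ▸ sInf_empty))

theorem thZFgraph_le_iff {k : ℕ} :
    thZFgraph G ≤ k ↔ ∃ (B : Set V) (F : Set (V × V)) (t : ℕ),
      IsZFForceSet G B F ∧ zfBlueAt G F B t = Set.univ ∧ B.ncard + t ≤ k := by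
  constructor
  · intro h
    have hfin : ∀ {x : ℕ∞}, x ≤ k → x ≠ ⊤ := (ne_top_of_le_ne_top (ENat.natCast_ne_top k) ·)
    obtain ⟨B, hB⟩ : ∃ B, thZFgraph G = thZF G B := ENat.sInf_mem_of_sInf_ne_top (hfin h)
    rw [hB, thZF] at h
    obtain ⟨F, hF, hpt⟩ : ∃ F, IsZFForceSet G B F ∧ ptZF G B = ptZFofF G F B :=
      ENat.sInf_mem_of_sInf_ne_top (hfin (le_add_self.trans h))
    rw [hpt] at h
    obtain ⟨t, ht, hu⟩ : ∃ t : ℕ, ptZFofF G F B = t ∧ zfBlueAt G F B t = Set.univ :=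
      ENat.sInf_mem_of_sInf_ne_top (hfin (le_add_self.trans h))
    rw [ht] at h
    exact ⟨B, F, t, hF, hu, by exact_mod_cast h⟩
  · rintro ⟨B, F, t, hF, hu, hk⟩
    have hpt : ptZF G B ≤ t := (sInf_le ⟨F, hF, rfl⟩ : ptZF G B ≤ ptZFofF G F B).trans
      (sInf_le ⟨t, rfl, hu⟩)
    calc thZFgraph G ≤ thZF G B := sInf_le ⟨B, rfl⟩
      _ ≤ B.ncard + t := add_le_add le_rfl hpt
      _ ≤ k := by exact_mod_cast hk

end Forcing

theorem ncard_le_ncard_of_forall_exists_functional {r : α → β → Prop}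
    (hr : ∀ a b b', r a b → r a b' → b = b') {s : Set β} {t : Set α}
    (h : ∀ b ∈ s, ∃ a ∈ t, r a b) (ht : t.Finite := by toFinite_tac) : s.ncard ≤ t.ncard := by
  rcases s.eq_empty_or_nonempty with rfl | ⟨b₀, hb₀⟩
  · simp
  obtain ⟨a₀, -⟩ := h b₀ hb₀
  have : Nonempty α := ⟨a₀⟩
  choose! f hft hfr using h
  exact Set.ncard_le_ncard_of_injOn f hft
    (fun b₁ hb₁ b₂ hb₂ he => hr _ _ _ (hfr b₁ hb₁) (he ▸ hfr b₂ hb₂)) ht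

section Throttling

variable [Fintype V] {G : SimpleGraph V} {B : Set V} {F : Set (V × V)}

theorem IsZFForceSet.ncard_zfBlueAt_succ_le (hF : IsZFForceSet G B F) (t : ℕ) :
    (zfBlueAt G F B (t + 1)).ncard ≤ B.ncard + (zfBlueAt G F B t).ncard := by
  calc (zfBlueAt G F B (t + 1)).ncard ≤ (zfBlueAt G F B (t + 1) \ B).ncard + B.ncard :=
        Set.ncard_le_ncard_sdiff_add_ncard _ _
    _ ≤ (zfBlueAt G F B t).ncard + B.ncard :=
        Nat.add_le_add_right (ncard_le_ncard_of_forall_exists_functional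
          (r := fun v w => (v, w) ∈ F) (fun _ _ _ => hF.functional)
          fun _ hw => exists_forcer_of_mem_zfBlueAt_succ hw.1 hw.2) _
    _ = B.ncard + (zfBlueAt G F B t).ncard := add_comm _ _

theorem IsZFForceSet.ncard_zfBlueAt_le (hF : IsZFForceSet G B F) :
    ∀ t : ℕ, (zfBlueAt G F B t).ncard ≤ (t + 1) * B.ncard
  | 0 => by simp [zfBlueAt]
  | t + 1 => by
    have := hF.ncard_zfBlueAt_le t
    have := hF.ncard_zfBlueAt_succ_le t
    linarith

theorem IsZFForceSet.card_le_of_zfBlueAt_eq_univ (hF : IsZFForceSet G B F) {t : ℕ}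
    (ht : zfBlueAt G F B t = Set.univ) : Fintype.card V ≤ (t + 1) * B.ncard := by
  simpa [ht, Set.ncard_univ, Nat.card_eq_fintype_card] using hF.ncard_zfBlueAt_le t

theorem thZFgraph_le_card : thZFgraph G ≤ Fintype.card V :=
  thZFgraph_le_iff.2 ⟨Set.univ, _, 0, isZFForceSet_of_endBlue_eq_univ (L := []) trivial
    (by simp [endBlue]), rfl, by simp [Set.ncard_univ]⟩

theorem three_le_thZFgraph (hV : 3 ≤ Fintype.card V) : 3 ≤ thZFgraph G := by
  by_contra! h
  have h2 : thZFgraph G ≤ (2 : ℕ) := Order.le_of_lt_add_one (h.trans_eq (by norm_num))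
  obtain ⟨B, F, t, hF, ht, hk⟩ := thZFgraph_le_iff.1 h2
  have := hF.card_le_of_zfBlueAt_eq_univ ht
  have : t ≤ 2 := by omega
  interval_cases t <;> omega

end Throttling

def HasDisjointNonEdges (G : SimpleGraph V) : Prop :=
  ∃ a b c d : V, Gᶜ.Adj a b ∧ Gᶜ.Adj c d ∧ a ≠ c ∧ a ≠ d ∧ b ≠ c ∧ b ≠ d

instance [Fintype V] [DecidableEq V] (G : SimpleGraph V) [DecidableRel G.Adj] :
    Decidable (HasDisjointNonEdges G) := by
  unfold HasDisjointNonEdges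
  infer_instance

theorem HasDisjointNonEdges.map {G : SimpleGraph V} {H : SimpleGraph α} (e : G ≃g H)
    (h : HasDisjointNonEdges G) : HasDisjointNonEdges H := by
  obtain ⟨a, b, c, d, hab, hcd, hac, had, hbc, hbd⟩ := h
  have hcompl : ∀ {x y}, Gᶜ.Adj x y → Hᶜ.Adj (e x) (e y) := fun hxy =>
    (compl_adj _ _ _).2 ⟨e.injective.ne hxy.1, fun h => hxy.2 (e.map_adj_iff.1 h)⟩
  exact ⟨e a, e b, e c, e d, hcompl hab, hcompl hcd, e.injective.ne hac, e.injective.ne had,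
    e.injective.ne hbc, e.injective.ne hbd⟩

section FourVertices

variable {G : SimpleGraph V} {B : Set V} {F : Set (V × V)}

theorem IsZFForceSet.hasDisjointNonEdges (hF : IsZFForceSet G B F) {w₁ w₂ : V} (hw : w₁ ≠ w₂)
    (hw₁ : w₁ ∈ zfBlueAt G F B 1 \ B) (hw₂ : w₂ ∈ zfBlueAt G F B 1 \ B) :
    HasDisjointNonEdges G := by
  obtain ⟨v₁, hv₁, hF₁, hN₁⟩ := exists_force_of_mem_zfBlueAt_succ hw₁.1 hw₁.2
  obtain ⟨v₂, hv₂, hF₂, hN₂⟩ := exists_force_of_mem_zfBlueAt_succ hw₂.1 hw₂.2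
  have hv : v₁ ≠ v₂ := by
    rintro rfl
    exact hw (hF.functional hF₁ hF₂)
  have hne : ∀ {v w}, v ∈ B → w ∉ B → v ≠ w := fun hv hw h => hw (h ▸ hv)
  refine ⟨v₁, w₂, v₂, w₁, ⟨hne hv₁ hw₂.2, fun h => ?_⟩, ⟨hne hv₂ hw₁.2, fun h => ?_⟩, hv,
    hne hv₁ hw₁.2, (hne hv₂ hw₂.2).symm, hw.symm⟩
  · exact (hN₁ w₂ h).elim hw₂.2 hw.symm
  · exact (hN₂ w₁ h).elim hw₁.2 hw

theorem thZFgraph_le_three_of_hasDisjointNonEdges [Fintype V] (hV : Fintype.card V ≤ 4)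
    (h : HasDisjointNonEdges G) : thZFgraph G ≤ 3 := by
  classical
  obtain ⟨a, b, c, d, hab, hcd, hac, had, hbc, hbd⟩ := h
  have hV : ∀ x, x = a ∨ x = b ∨ x = c ∨ x = d := by
    have hcard : ({a, b, c, d} : Finset V).card = Fintype.card V := by
      refine le_antisymm (Finset.card_le_univ _) (hV.trans_eq ?_)
      rw [Finset.card_insert_of_notMem (by simp [hab.1, hac, had]),
        Finset.card_insert_of_notMem (by simp [hbc, hbd]), Finset.card_pair hcd.1]
    intro x
    simpa using Finset.eq_univ_iff_forall.1 (Finset.eq_univ_of_card _ hcard) x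
  have hN : ∀ {u u'}, Gᶜ.Adj u u' → ∀ x, G.Adj u x → x ≠ u ∧ x ≠ u' := fun h x hx =>
    ⟨hx.ne.symm, by rintro rfl; exact h.2 hx⟩
  -- from `B = {a, c}`, `a` forces `d` and `c` forces `b`
  have hNa : ∀ x, G.Adj a x → x ∈ ({a, c} : Set V) ∨ x = d := fun x hx => by
    have := hN hab x hx
    rcases hV x with rfl | rfl | rfl | rfl <;> simp_all
  have hNc : ∀ x, G.Adj c x → x ∈ ({a, c} : Set V) ∨ x = b := fun x hx => by
    have := hN hcd x hx
    rcases hV x with rfl | rfl | rfl | rfl <;> simp_all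
  set L := [(a, d), (c, b)]
  have hL : zfValidList G {a, c} ∅ L :=
    ⟨⟨by simp, by simp [had.symm, hcd.1.symm], by simp, zfRule_iff.2 hNa⟩,
      ⟨by simp, by simp [hbd, hab.1.symm, hbc], by simp [hac.symm],
        zfRule_iff.2 fun x hx => (hNc x hx).imp_left (Set.mem_insert_of_mem d)⟩, trivial⟩
  have hF := isZFForceSet_of_endBlue_eq_univ hL <| Set.eq_univ_of_forall fun x => by
    rcases hV x with rfl | rfl | rfl | rfl <;> simp [endBlue, L]
  refine thZFgraph_le_iff.2 ⟨{a, c}, _, 1, hF, Set.eq_univ_of_forall fun x => ?_,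
    by rw [Set.ncard_pair hac]⟩
  rcases hV x with rfl | rfl | rfl | rfl
  · exact zfBlueAt_mono zero_le_one (by simp : x ∈ ({x, c} : Set V))
  · exact mem_zfBlueAt_one (v := c) (by simp [L]) (by simp) hNc
  · exact zfBlueAt_mono zero_le_one (by simp : x ∈ ({a, x} : Set V))
  · exact mem_zfBlueAt_one (v := a) (by simp [L]) (by simp) hNa

end FourVertices

theorem thZFgraph_eq_three_iff [Fintype V] {G : SimpleGraph V} :
    thZFgraph G = 3 ↔
      Fintype.card V = 3 ∨ (Fintype.card V = 4 ∧ HasDisjointNonEdges G) := by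
  constructor
  · intro h
    have h3 : 3 ≤ Fintype.card V := by exact_mod_cast h ▸ thZFgraph_le_card (G := G)
    obtain ⟨B, F, t, hF, ht, hk⟩ := thZFgraph_le_iff (G := G) (k := 3).1 (by simp [h])
    have hcard := hF.card_le_of_zfBlueAt_eq_univ ht
    obtain h3 | h4 := h3.eq_or_lt
    · exact Or.inl h3.symm
    -- `|V| ≤ (t + 1) |B|` with `|B| + t ≤ 3` forces `|B| = 2`, `t = 1` and `|V| = 4`
    have ⟨hB, ht1⟩ : B.ncard = 2 ∧ t = 1 := by
      have : t ≤ 3 := by omega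
      interval_cases t <;> omega
    subst ht1
    have hBc : 1 < Bᶜ.ncard := by
      have := Set.ncard_add_ncard_compl B
      rw [Nat.card_eq_fintype_card] at this
      omega
    obtain ⟨w₁, hw₁, w₂, hw₂, hw⟩ := (Set.one_lt_ncard (Set.toFinite _)).1 hBc
    have hblue : ∀ w, w ∈ zfBlueAt G F B 1 := by simp [ht]
    exact Or.inr ⟨by omega, hF.hasDisjointNonEdges hw ⟨hblue w₁, hw₁⟩ ⟨hblue w₂, hw₂⟩⟩
  · rintro (h3 | ⟨h4, h⟩)
    · exact le_antisymm (by simpa [h3] using thZFgraph_le_card (G := G))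
        (three_le_thZFgraph h3.ge)
    · exact le_antisymm (thZFgraph_le_three_of_hasDisjointNonEdges h4.le h)
        (three_le_thZFgraph (by omega))

/-- As `b` ranges over `ι → Bool`, this enumerates the graphs on `α` with edges among the
pairs `ends k`, which keeps the search space of `decide` small. -/
def edgeCodeGraph {ι : Type*} (ends : ι → α × α) (b : ι → Bool) : SimpleGraph α :=
  SimpleGraph.fromRel fun i j => ∃ k, b k = true ∧ ends k = (i, j)

instance {ι : Type*} [Fintype ι] [DecidableEq α] (ends : ι → α × α) (b : ι → Bool) :
    DecidableRel (edgeCodeGraph ends b).Adj := by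
  unfold edgeCodeGraph
  infer_instance

theorem exists_eq_edgeCodeGraph {ι : Type*} (ends : ι → α × α)
    (hends : ∀ i j, i ≠ j → ∃ k, ends k = (i, j) ∨ ends k = (j, i)) (H : SimpleGraph α) :
    ∃ b, H = edgeCodeGraph ends b := by
  classical
  refine ⟨fun k => decide (H.Adj (ends k).1 (ends k).2), SimpleGraph.ext <| funext₂ fun i j =>
    propext ⟨fun hij => ?_, ?_⟩⟩
  · obtain ⟨k, hk | hk⟩ := hends i j hij.ne
    · exact ⟨hij.ne, Or.inl ⟨k, by simp [hk, hij], hk⟩⟩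
    · exact ⟨hij.ne, Or.inr ⟨k, by simp [hk, hij.symm], hk⟩⟩
  · rintro ⟨-, ⟨k, hb, hk⟩ | ⟨k, hb, hk⟩⟩
    · simpa [hk] using hb
    · simpa [hk] using (of_decide_eq_true hb).symm

theorem exists_iso_edgeCodeGraph {ι : Type*} (ends : ι → α × α)
    (hends : ∀ i j, i ≠ j → ∃ k, ends k = (i, j) ∨ ends k = (j, i)) (G : SimpleGraph V)
    (e : V ≃ α) : ∃ b, Nonempty (G ≃g edgeCodeGraph ends b) := by
  obtain ⟨b, hb⟩ := exists_eq_edgeCodeGraph ends hends (G.map e)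
  exact ⟨b, ⟨hb ▸ Iso.map e G⟩⟩

/-- An isomorphism `G ≃g H` given by a permutation, in a form that `decide` can check. -/
def IsPermIso (G H : SimpleGraph α) : Prop :=
  ∃ σ : Equiv.Perm α, ∀ i j, H.Adj (σ i) (σ j) ↔ G.Adj i j

instance [Fintype α] [DecidableEq α] (G H : SimpleGraph α) [DecidableRel G.Adj]
    [DecidableRel H.Adj] : Decidable (IsPermIso G H) := by
  unfold IsPermIso
  infer_instance

theorem IsPermIso.nonempty_iso {G H : SimpleGraph α} (h : IsPermIso G H) : Nonempty (G ≃g H) :=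
  let ⟨σ, hσ⟩ := h
  ⟨⟨σ, hσ _ _⟩⟩

instance (n : ℕ) : DecidableRel (pathGraph n).Adj :=
  fun _ _ => decidable_of_iff _ pathGraph_adj.symm

def edgesFin3 : Fin 3 → Fin 3 × Fin 3 := ![(0, 1), (0, 2), (1, 2)]

def edgesFin4 : Fin 6 → Fin 4 × Fin 4 := ![(0, 1), (0, 2), (0, 3), (1, 2), (1, 3), (2, 3)]

theorem isPermIso_of_fin_three : ∀ b : Fin 3 → Bool,
    IsPermIso (edgeCodeGraph edgesFin3 b) ⊤ ∨
      IsPermIso (edgeCodeGraph edgesFin3 b) (pathGraph 3) ∨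
      IsPermIso (edgeCodeGraph edgesFin3 b) (fromEdgeSet {s((1 : Fin 3), (2 : Fin 3))}) ∨
      IsPermIso (edgeCodeGraph edgesFin3 b) ⊥ := by
  decide

set_option maxHeartbeats 1000000 in
set_option synthInstance.maxSize 1000 in
set_option maxRecDepth 10000 in
theorem isPermIso_of_fin_four_of_hasDisjointNonEdges : ∀ b : Fin 6 → Bool,
    HasDisjointNonEdges (edgeCodeGraph edgesFin4 b) →
      IsPermIso (edgeCodeGraph edgesFin4 b) (cycleGraph 4) ∨
      IsPermIso (edgeCodeGraph edgesFin4 b) (pathGraph 4) ∨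
      IsPermIso (edgeCodeGraph edgesFin4 b)
        (fromEdgeSet {s((0 : Fin 4), (1 : Fin 4)), s((2 : Fin 4), (3 : Fin 4))}) ∨
      IsPermIso (edgeCodeGraph edgesFin4 b)
        (fromEdgeSet {s((1 : Fin 4), (2 : Fin 4)), s((2 : Fin 4), (3 : Fin 4))}) ∨
      IsPermIso (edgeCodeGraph edgesFin4 b) (fromEdgeSet {s((0 : Fin 4), (1 : Fin 4))}) ∨
      IsPermIso (edgeCodeGraph edgesFin4 b) ⊥ := by
  decide

theorem card_eq_three_iff [Fintype V] (G : SimpleGraph V) :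
    Fintype.card V = 3 ↔
      Nonempty (G ≃g (⊤ : SimpleGraph (Fin 3))) ∨
      Nonempty (G ≃g pathGraph 3) ∨
      Nonempty (G ≃g fromEdgeSet {s((1 : Fin 3), (2 : Fin 3))}) ∨
      Nonempty (G ≃g (⊥ : SimpleGraph (Fin 3))) := by
  constructor
  · intro h
    obtain ⟨b, ⟨e⟩⟩ := exists_iso_edgeCodeGraph edgesFin3 (by decide) G
      (Fintype.equivFinOfCardEq h)
    have key : ∀ T, IsPermIso (edgeCodeGraph edgesFin3 b) T → Nonempty (G ≃g T) :=
      fun _ hT => hT.nonempty_iso.map e.trans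
    rcases isPermIso_of_fin_three b with h | h | h | h <;> simp only [key _ h, true_or, or_true]
  · rintro (h | h | h | h) <;> exact h.elim fun e => by simpa using Fintype.card_congr e.toEquiv

theorem card_eq_four_and_hasDisjointNonEdges_iff [Fintype V] (G : SimpleGraph V) :
    Fintype.card V = 4 ∧ HasDisjointNonEdges G ↔
      Nonempty (G ≃g cycleGraph 4) ∨
      Nonempty (G ≃g pathGraph 4) ∨
      Nonempty (G ≃g fromEdgeSet {s((0 : Fin 4), (1 : Fin 4)), s((2 : Fin 4), (3 : Fin 4))}) ∨
      Nonempty (G ≃g fromEdgeSet {s((1 : Fin 4), (2 : Fin 4)), s((2 : Fin 4), (3 : Fin 4))}) ∨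
      Nonempty (G ≃g fromEdgeSet {s((0 : Fin 4), (1 : Fin 4))}) ∨
      Nonempty (G ≃g (⊥ : SimpleGraph (Fin 4))) := by
  constructor
  · rintro ⟨h, hG⟩
    obtain ⟨b, ⟨e⟩⟩ := exists_iso_edgeCodeGraph edgesFin4 (by decide) G
      (Fintype.equivFinOfCardEq h)
    have key : ∀ T, IsPermIso (edgeCodeGraph edgesFin4 b) T → Nonempty (G ≃g T) :=
      fun _ hT => hT.nonempty_iso.map e.trans
    rcases isPermIso_of_fin_four_of_hasDisjointNonEdges b (hG.map e) with h | h | h | h | h | h <;>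
      simp only [key _ h, true_or, or_true]
  · have key : ∀ T : SimpleGraph (Fin 4), HasDisjointNonEdges T → Nonempty (G ≃g T) →
        Fintype.card V = 4 ∧ HasDisjointNonEdges G :=
      fun _ hT ⟨e⟩ => ⟨by simpa using Fintype.card_congr e.toEquiv, hT.map e.symm⟩
    rintro (h | h | h | h | h | h) <;> exact key _ (by decide) h

/-- `th_⌊Z⌋(G) = 3` iff `G` is one of the ten graphs
`C_4, P_4, 2K_2, K_1 ⊔ P_3, K_2 ⊔ 2K_1, 4K_1, K_3, P_3, K_1 ⊔ K_2, 3K_1`. -/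
theorem stmt16 {V : Type*} [Fintype V] (G : SimpleGraph V) :
    thZFgraph G = 3 ↔
      Nonempty (G ≃g SimpleGraph.cycleGraph 4) ∨
      Nonempty (G ≃g SimpleGraph.pathGraph 4) ∨
      Nonempty (G ≃g SimpleGraph.fromEdgeSet {s((0 : Fin 4), (1 : Fin 4)), s((2 : Fin 4), (3 : Fin 4))}) ∨
      Nonempty (G ≃g SimpleGraph.fromEdgeSet {s((1 : Fin 4), (2 : Fin 4)), s((2 : Fin 4), (3 : Fin 4))}) ∨
      Nonempty (G ≃g SimpleGraph.fromEdgeSet {s((0 : Fin 4), (1 : Fin 4))}) ∨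
      Nonempty (G ≃g (⊥ : SimpleGraph (Fin 4))) ∨
      Nonempty (G ≃g (⊤ : SimpleGraph (Fin 3))) ∨
      Nonempty (G ≃g SimpleGraph.pathGraph 3) ∨
      Nonempty (G ≃g SimpleGraph.fromEdgeSet {s((1 : Fin 3), (2 : Fin 3))}) ∨
      Nonempty (G ≃g (⊥ : SimpleGraph (Fin 3))) := by
  rw [thZFgraph_eq_three_iff, card_eq_three_iff G, card_eq_four_and_hasDisjointNonEdges_iff G,
    or_comm]
  simp only [or_assoc]

end ZFT
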